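/- If C is a quantum comb and Γ is a dual comb on ⊗_{j=1}^N (H_j^out ⊗ H_j^in), then Tr(Γ C) = 1; consequently Γ^{1/2} C Γ^{1/2} is a density operator (positive semidefinite with unit trace). -/

import Mathlib

open Matrix Filter
open scoped ComplexOrder

attribute [local instance] Classical.propDecidable

noncomputable section

namespace QComb

/-- Dimension of the `j`-th factor of the partial tensor product keeping only
the first `n` factors (the remaining factors are replaced by trivial spaces). -/
def cut {N : ℕ} (d : Fin N → ℕ) (n : ℕ) (j : Fin N) : ℕ := if j.val < n then d j else 1

/-- Index set of the tensor product of the first `n` factors of the family of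
Hilbert spaces `ℂ^{d j}`, `j : Fin N`. -/
def CutIdx {N : ℕ} (d : Fin N → ℕ) (n : ℕ) : Type := ∀ j : Fin N, Fin (cut d n j)

instance {N : ℕ} (d : Fin N → ℕ) (n : ℕ) : Fintype (CutIdx d n) := Pi.instFintype

instance {N : ℕ} (d : Fin N → ℕ) (n : ℕ) : DecidableEq (CutIdx d n) :=
  fun a b => Fintype.decidablePiFintype a b

/-- Operators on the tensor product `⊗_{j<n} (H_j^out ⊗ H_j^in)` where
`H_j^out = ℂ^{dO j}` and `H_j^in = ℂ^{dI j}`. -/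
abbrev CMat {N : ℕ} (dO dI : Fin N → ℕ) (n : ℕ) : Type :=
  Matrix (CutIdx dO n × CutIdx dI n) (CutIdx dO n × CutIdx dI n) ℂ

/-- Extend an index on the first `n` factors by a value `k` in the `n`-th factor. -/
def extendAt {N : ℕ} (d : Fin N → ℕ) (n : Fin N) (x : CutIdx d n.val) (k : Fin (d n)) :
    CutIdx d (n.val + 1) := fun j =>
  if h : j.val < n.val then
    Fin.cast (show cut d n.val j = cut d (n.val + 1) j by
      simp [cut, h, Nat.lt_succ_of_lt h]) (x j)
  else if h2 : j.val < n.val + 1 then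
    Fin.cast (show d n = cut d (n.val + 1) j by
      have hje : j = n := Fin.ext (by omega)
      subst hje; simp [cut, h2]) k
  else
    Fin.cast (show cut d n.val j = cut d (n.val + 1) j by simp [cut, h, h2]) (x j)

/-- Restrict an index on the first `n+1` factors to the first `n` factors. -/
def restrictAt {N : ℕ} (d : Fin N → ℕ) (n : Fin N) (x : CutIdx d (n.val + 1)) :
    CutIdx d n.val := fun j =>
  if h : j.val < n.val then
    Fin.cast (show cut d (n.val + 1) j = cut d n.val j by
      simp [cut, h, Nat.lt_succ_of_lt h]) (x j)
  else
    ⟨0, by simp only [cut, if_neg h]; omega⟩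

/-- The component of an index on the first `n+1` factors in the `n`-th factor. -/
def componentAt {N : ℕ} (d : Fin N → ℕ) (n : Fin N) (x : CutIdx d (n.val + 1)) :
    Fin (d n) :=
  Fin.cast (show cut d (n.val + 1) n = d n by simp [cut]) (x n)

/-- Partial trace over the `n`-th output space. -/
def ptraceO {N : ℕ} (dO : Fin N → ℕ) (n : Fin N) {β : Type} [Fintype β]
    (M : Matrix (CutIdx dO (n.val + 1) × β) (CutIdx dO (n.val + 1) × β) ℂ) :
    Matrix (CutIdx dO n.val × β) (CutIdx dO n.val × β) ℂ :=
  fun p q => ∑ k : Fin (dO n), M (extendAt dO n p.1 k, p.2) (extendAt dO n q.1 k, q.2)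

/-- Partial trace over the `n`-th input space. -/
def ptraceI {N : ℕ} (dI : Fin N → ℕ) (n : Fin N) {α : Type} [Fintype α]
    (M : Matrix (α × CutIdx dI (n.val + 1)) (α × CutIdx dI (n.val + 1)) ℂ) :
    Matrix (α × CutIdx dI n.val) (α × CutIdx dI n.val) ℂ :=
  fun p q => ∑ k : Fin (dI n), M (p.1, extendAt dI n p.2 k) (q.1, extendAt dI n q.2 k)

/-- Tensoring with the identity on the `n`-th output space. -/
def idTensorO {N : ℕ} (dO : Fin N → ℕ) (n : Fin N) {β : Type}
    (M : Matrix (CutIdx dO n.val × β) (CutIdx dO n.val × β) ℂ) :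
    Matrix (CutIdx dO (n.val + 1) × β) (CutIdx dO (n.val + 1) × β) ℂ :=
  fun p q => (if componentAt dO n p.1 = componentAt dO n q.1 then (1 : ℂ) else 0) *
    M (restrictAt dO n p.1, p.2) (restrictAt dO n q.1, q.2)

/-- Tensoring with the identity on the `n`-th input space. -/
def idTensorI {N : ℕ} (dI : Fin N → ℕ) (n : Fin N) {α : Type}
    (M : Matrix (α × CutIdx dI n.val) (α × CutIdx dI n.val) ℂ) :
    Matrix (α × CutIdx dI (n.val + 1)) (α × CutIdx dI (n.val + 1)) ℂ :=
  fun p q => (if componentAt dI n p.2 = componentAt dI n q.2 then (1 : ℂ) else 0) *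
    M (p.1, restrictAt dI n p.2) (q.1, restrictAt dI n q.2)

/-- Transport an operator along an equality of the number of kept factors. -/
def castCMat {N : ℕ} (dO dI : Fin N → ℕ) {a b : ℕ} (h : a = b) (M : CMat dO dI a) :
    CMat dO dI b := h ▸ M

/-- `C` is a quantum comb on `⊗_{j=1}^N (H_j^out ⊗ H_j^in)`:
it is positive semidefinite and admits a chain `C⁽ⁿ⁾` of positive semidefinite operators with
`C⁽ᴺ⁾ = C`, `C⁽⁰⁾ = 1` and `Tr_{H_n^out} C⁽ⁿ⁾ = I_{H_n^in} ⊗ C⁽ⁿ⁻¹⁾`. -/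
def IsQuantumComb {N : ℕ} (dO dI : Fin N → ℕ) (C : CMat dO dI N) : Prop :=
  C.PosSemidef ∧ ∃ Cn : (n : ℕ) → CMat dO dI n,
    (∀ n ≤ N, (Cn n).PosSemidef) ∧ Cn N = C ∧ Cn 0 = 1 ∧
    ∀ n : Fin N, ptraceO dO n (Cn (n.val + 1)) = idTensorI dI n (Cn n.val)

/-- `Γ` is a dual comb: `Γ = I_{H_N^out} ⊗ Γ⁽ᴺ⁾` for a chain of positive semidefinite operators
`Γ⁽ⁿ⁾` on `H_n^in ⊗ (⊗_{j<n} (H_j^out ⊗ H_j^in))` with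
`Tr_{H_n^in} Γ⁽ⁿ⁾ = I_{H_{n-1}^out} ⊗ Γ⁽ⁿ⁻¹⁾` and `Tr_{H_1^in} Γ⁽¹⁾ = 1`.
Here `G m` plays the role of `Γ⁽ᵐ⁺¹⁾`. -/
def IsDualComb {N : ℕ} (dO dI : Fin N → ℕ) (Γ : CMat dO dI N) : Prop :=
  ∃ G : (m : ℕ) → Matrix (CutIdx dO m × CutIdx dI (m + 1)) (CutIdx dO m × CutIdx dI (m + 1)) ℂ,
    (∀ m < N, (G m).PosSemidef) ∧
    (∀ h0 : 0 < N, ptraceI dI ⟨0, h0⟩ (G 0) = 1) ∧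
    (∀ m, ∀ h : m + 1 < N,
      ptraceI dI ⟨m + 1, h⟩ (G (m + 1)) = idTensorO dO ⟨m, Nat.lt_of_succ_lt h⟩ (G m)) ∧
    (∀ m, ∀ h : m + 1 = N,
      Γ = castCMat dO dI h (idTensorO dO ⟨m, h ▸ Nat.lt_succ_self m⟩ (G m))) ∧
    (N = 0 → Γ = 1)

/-- The trace norm `‖A‖₁ = Tr √(AᴴA)`. -/
def traceNorm {ι : Type} [Fintype ι] [DecidableEq ι] (A : Matrix ι ι ℂ) : ℝ :=
  ((((Matrix.posSemidef_conjTranspose_mul_self A).1.eigenvectorUnitary : Matrix ι ι ℂ) *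
    diagonal (((↑) : ℝ → ℂ) ∘ (Real.sqrt ∘ (Matrix.posSemidef_conjTranspose_mul_self A).1.eigenvalues)) *
    (star (Matrix.posSemidef_conjTranspose_mul_self A).1.eigenvectorUnitary : Matrix ι ι ℂ)).trace).re

/-- Square root of a positive semidefinite matrix (junk value `0` otherwise). -/
def msqrt {ι : Type} [Fintype ι] [DecidableEq ι] (A : Matrix ι ι ℂ) : Matrix ι ι ℂ :=
  if h : A.PosSemidef then (h.1.eigenvectorUnitary : Matrix ι ι ℂ) *
    diagonal (((↑) : ℝ → ℂ) ∘ (Real.sqrt ∘ h.1.eigenvalues)) * (star h.1.eigenvectorUnitary : Matrix ι ι ℂ)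
  else 0

/-- Positive part `A₊` of a Hermitian matrix (junk value `0` otherwise). -/
def posPartMat {ι : Type} [Fintype ι] [DecidableEq ι] (A : Matrix ι ι ℂ) : Matrix ι ι ℂ :=
  if h : A.IsHermitian then h.cfc (fun x => max x 0) else 0

/-- Matrix logarithm in base 2 of a Hermitian matrix via the functional calculus
(junk value `0` otherwise). -/
def mlog {ι : Type} [Fintype ι] [DecidableEq ι] (A : Matrix ι ι ℂ) : Matrix ι ι ℂ :=
  if h : A.IsHermitian then h.cfc (Real.logb 2) else 0

/-- Quantum relative entropy `D(ρ‖σ) = Tr[ρ (log ρ - log σ)]` (base-2 logarithm). -/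
def relEnt {ι : Type} [Fintype ι] [DecidableEq ι] (ρ σ : Matrix ι ι ℂ) : ℝ :=
  ((ρ * (mlog ρ - mlog σ)).trace).re

/-- Support inclusion `supp A ⊆ supp B` (ranges of the associated linear maps). -/
def suppSubset {ι : Type} [Fintype ι] [DecidableEq ι] (A B : Matrix ι ι ℂ) : Prop :=
  LinearMap.range (Matrix.toLin' A) ≤ LinearMap.range (Matrix.toLin' B)

/-- The feasible set of the max-relative entropy `D_max(A‖B)`. -/
def DmaxSet {ι : Type} [Fintype ι] [DecidableEq ι] (A B : Matrix ι ι ℂ) : Set ℝ :=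
  {lam : ℝ | 0 ≤ lam ∧ ((lam : ℂ) • B - A).PosSemidef}

/-- Max-relative entropy `D_max(A‖B) = log min {λ ≥ 0 | λB - A ≥ 0}`, equal to `⊤`
when no such `λ` exists (i.e. when `supp A ⊄ supp B`). -/
def Dmax {ι : Type} [Fintype ι] [DecidableEq ι] (A B : Matrix ι ι ℂ) : EReal :=
  if (DmaxSet A B).Nonempty then ((Real.logb 2 (sInf (DmaxSet A B)) : ℝ) : EReal) else ⊤

/-- Smooth max-relative entropy of quantum combs:
`D_max^ε(C₀‖C₁) = min { D_max(C̃‖C₁) | C̃ a quantum comb, ½‖C̃ - C₀‖₁ ≤ ε }`. -/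
def DmaxSmoothComb {N : ℕ} (dO dI : Fin N → ℕ) (ε : ℝ) (C0 C1 : CMat dO dI N) : EReal :=
  sInf { x : EReal | ∃ C : CMat dO dI N, IsQuantumComb dO dI C ∧
    traceNorm (C - C0) ≤ 2 * ε ∧ x = Dmax C C1 }

/-- Revised smooth max-relative entropy of quantum combs:
`D̃_max^ε(C₀‖C₁) = max_Γ min { D_max(C‖√Γ C₁ √Γ) | C ≥ 0, Tr C = 1,
½‖√Γ C₀ √Γ - C‖₁ ≤ ε }`, the max over dual combs `Γ`. -/
def DmaxTilde {N : ℕ} (dO dI : Fin N → ℕ) (ε : ℝ) (C0 C1 : CMat dO dI N) : EReal :=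
  sSup { x : EReal | ∃ Γ : CMat dO dI N, IsDualComb dO dI Γ ∧
    x = sInf { y : EReal | ∃ C : CMat dO dI N, C.PosSemidef ∧ C.trace = 1 ∧
      traceNorm (msqrt Γ * C0 * msqrt Γ - C) ≤ 2 * ε ∧
      y = Dmax C (msqrt Γ * C1 * msqrt Γ) } }

/-- Hypothesis-testing quantity
`β_δ(C₀‖C₁) = min { Tr[Π √Γ C₁ √Γ] | 0 ≤ Π ≤ I, Γ dual comb, Tr[(I-Π) √Γ C₀ √Γ] ≤ δ }`. -/
def betaHT {N : ℕ} (dO dI : Fin N → ℕ) (δ : ℝ) (C0 C1 : CMat dO dI N) : ℝ :=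
  sInf { b : ℝ | ∃ P Γ : CMat dO dI N, P.PosSemidef ∧ ((1 : CMat dO dI N) - P).PosSemidef ∧
    IsDualComb dO dI Γ ∧
    (((1 - P) * (msqrt Γ * C0 * msqrt Γ)).trace).re ≤ δ ∧
    b = ((P * (msqrt Γ * C1 * msqrt Γ)).trace).re }

/-- Maximum score `w_max(Ω) = max { Tr(Ω C) | C a quantum comb }`. -/
def wmax {N : ℕ} (dO dI : Fin N → ℕ) (Ω : CMat dO dI N) : ℝ :=
  sSup { w : ℝ | ∃ C : CMat dO dI N, IsQuantumComb dO dI C ∧ w = ((Ω * C).trace).re }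

/-- Smooth maximum score `w_max^ε(Ω) = sup { w_max(Ω') | Ω' ≥ 0, Tr Ω' = Tr Ω,
½‖Ω - Ω'‖₁ ≤ ε }`. -/
def wmaxSmooth {N : ℕ} (dO dI : Fin N → ℕ) (ε : ℝ) (Ω : CMat dO dI N) : ℝ :=
  sSup { w : ℝ | ∃ Ω' : CMat dO dI N, Ω'.PosSemidef ∧ traceNorm (Ω - Ω') ≤ 2 * ε ∧
    Ω'.trace = Ω.trace ∧ w = wmax dO dI Ω' }

/-- Dimension function of the `n`-fold concatenated network. -/
def repDim {N : ℕ} (n : ℕ) (d : Fin N → ℕ) : Fin (n * N) → ℕ :=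
  fun j => d ⟨j.val % N, Nat.mod_lt _ (Nat.pos_of_ne_zero fun h =>
    Nat.not_lt_zero j.val (by simpa [h] using j.isLt))⟩

/-- Extract the `i`-th copy of an index of the `n`-fold concatenated network. -/
def sliceIdx {N : ℕ} (n : ℕ) (d : Fin N → ℕ) (i : Fin n) (x : CutIdx (repDim n d) (n * N)) :
    CutIdx d N := fun j =>
  Fin.cast (by
    have hj := j.isLt
    have h1 : (i.val + 1) * N ≤ n * N := Nat.mul_le_mul_right N i.isLt
    have h2 : (i.val + 1) * N = i.val * N + N := Nat.succ_mul _ _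
    have hb : i.val * N + j.val < n * N := by omega
    have hm : (i.val * N + j.val) % N = j.val := by
      rw [Nat.add_comm, Nat.add_mul_mod_self_right]; exact Nat.mod_eq_of_lt hj
    show cut (repDim n d) (n * N) ⟨i.val * N + j.val, hb⟩ = cut d N j
    simp only [cut, repDim, if_pos hb, if_pos hj]
    exact congrArg d (Fin.ext hm))
    (x ⟨i.val * N + j.val, by
      have hj := j.isLt
      have h1 : (i.val + 1) * N ≤ n * N := Nat.mul_le_mul_right N i.isLt
      have h2 : (i.val + 1) * N = i.val * N + N := Nat.succ_mul _ _
      omega⟩)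

/-- The `n`-fold tensor power `Ω^{⊗n}` on the `n`-fold concatenated network. -/
def tpow {N : ℕ} (dO dI : Fin N → ℕ) (n : ℕ) (Ω : CMat dO dI N) :
    CMat (repDim n dO) (repDim n dI) (n * N) :=
  fun p q => ∏ i : Fin n,
    Ω (sliceIdx n dO i p.1, sliceIdx n dI i p.2) (sliceIdx n dO i q.1, sliceIdx n dI i q.2)

/-- Extract the left part of an index of the concatenation of two networks. -/
def appendIdxL {N M : ℕ} (d : Fin N → ℕ) (e : Fin M → ℕ)
    (x : CutIdx (Fin.append d e) (N + M)) : CutIdx d N := fun j =>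
  Fin.cast (by
    show cut (Fin.append d e) (N + M) (Fin.castAdd M j) = cut d N j
    simp only [cut, if_pos (Fin.castAdd M j).isLt, if_pos j.isLt]
    exact Fin.append_left d e j) (x (Fin.castAdd M j))

/-- Extract the right part of an index of the concatenation of two networks. -/
def appendIdxR {N M : ℕ} (d : Fin N → ℕ) (e : Fin M → ℕ)
    (x : CutIdx (Fin.append d e) (N + M)) : CutIdx e M := fun j =>
  Fin.cast (by
    show cut (Fin.append d e) (N + M) (Fin.natAdd N j) = cut e M j
    simp only [cut, if_pos (Fin.natAdd N j).isLt, if_pos j.isLt]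
    exact Fin.append_right d e j) (x (Fin.natAdd N j))

/-- The tensor product `C ⊗ C'` of operators on two networks, as an operator on the
concatenated network with `N + M` steps. -/
def tens2 {N M : ℕ} {dO dI : Fin N → ℕ} {eO eI : Fin M → ℕ}
    (C : CMat dO dI N) (C' : CMat eO eI M) :
    CMat (Fin.append dO eO) (Fin.append dI eI) (N + M) :=
  fun p q =>
    C (appendIdxL dO eO p.1, appendIdxL dI eI p.2) (appendIdxL dO eO q.1, appendIdxL dI eI q.2) *
    C' (appendIdxR dO eO p.1, appendIdxR dI eI p.2) (appendIdxR dO eO q.1, appendIdxR dI eI q.2)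

/-!
Tensoring with the identity on one factor is adjoint, for the trace pairing, to the partial
trace over that factor. Hence, writing `Γ⁽ⁿ⁾` for the dual chain,
`Tr((I ⊗ Γ⁽ⁿ⁾) C⁽ⁿ⁾) = Tr(Γ⁽ⁿ⁾ Tr_out C⁽ⁿ⁾) = Tr(Γ⁽ⁿ⁾ (I ⊗ C⁽ⁿ⁻¹⁾)) = Tr(Tr_in Γ⁽ⁿ⁾ C⁽ⁿ⁻¹⁾)
= Tr((I ⊗ Γ⁽ⁿ⁻¹⁾) C⁽ⁿ⁻¹⁾)`, and the chain telescopes down to `Tr(Tr_in Γ⁽¹⁾ C⁽⁰⁾) = Tr 1 = 1`.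
Since `Γ ≥ 0`, `√Γ C √Γ` is positive and, by cyclicity, has trace `Tr(Γ C)`.
-/

section Indices

variable {N : ℕ} (d : Fin N → ℕ) (n : Fin N)

lemma restrictAt_extendAt (x : CutIdx d n.val) (k : Fin (d n)) :
    restrictAt d n (extendAt d n x k) = x := by
  funext j
  by_cases h : j.val < n.val
  · simp [restrictAt, extendAt, h]
  · have hx := (x j).isLt
    simp only [cut, if_neg h] at hx
    exact Fin.ext (by simp [restrictAt, h]; omega)

lemma componentAt_extendAt (x : CutIdx d n.val) (k : Fin (d n)) :
    componentAt d n (extendAt d n x k) = k :=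
  Fin.ext (by simp [componentAt, extendAt])

lemma extendAt_restrictAt (x : CutIdx d (n.val + 1)) :
    extendAt d n (restrictAt d n x) (componentAt d n x) = x := by
  funext j
  by_cases h : j.val < n.val
  · simp [extendAt, restrictAt, h]
  by_cases h2 : j.val < n.val + 1
  · obtain rfl : j = n := Fin.ext (by omega)
    exact Fin.ext (by simp [extendAt, componentAt, h2])
  · have hx := (x j).isLt
    simp only [cut, if_neg h2] at hx
    exact Fin.ext (by simp [extendAt, restrictAt, h, h2]; omega)

def extendAtEquiv : CutIdx d n.val × Fin (d n) ≃ CutIdx d (n.val + 1) where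
  toFun pk := extendAt d n pk.1 pk.2
  invFun x := (restrictAt d n x, componentAt d n x)
  left_inv _ := by simp [restrictAt_extendAt, componentAt_extendAt]
  right_inv := extendAt_restrictAt d n

lemma card_cutIdx_zero : Fintype.card (CutIdx d 0) = 1 := by
  unfold CutIdx
  rw [Fintype.card_pi]
  simp [cut]

variable {d n} {M : Type*} [AddCommMonoid M]

lemma sum_extendAt (f : CutIdx d (n.val + 1) → M) :
    ∑ x, f x = ∑ p : CutIdx d n.val, ∑ k : Fin (d n), f (extendAt d n p k) := by
  rw [← Equiv.sum_comp (extendAtEquiv d n) f, Fintype.sum_prod_type]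
  rfl

lemma sum_prod_extendAt_fst {β : Type} [Fintype β] (f : CutIdx d (n.val + 1) × β → M) :
    ∑ x, f x = ∑ p : CutIdx d n.val, ∑ b : β, ∑ k : Fin (d n), f (extendAt d n p k, b) := by
  rw [Fintype.sum_prod_type, sum_extendAt]
  exact Finset.sum_congr rfl fun _ _ => Finset.sum_comm

lemma sum_prod_extendAt_snd {α : Type} [Fintype α] (f : α × CutIdx d (n.val + 1) → M) :
    ∑ x, f x = ∑ a : α, ∑ p : CutIdx d n.val, ∑ k : Fin (d n), f (a, extendAt d n p k) := by
  rw [Fintype.sum_prod_type]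
  exact Finset.sum_congr rfl fun _ _ => sum_extendAt _

end Indices

section PartialTrace

variable {N : ℕ} (n : Fin N)

lemma trace_idTensorO_mul {dO : Fin N → ℕ} {β : Type} [Fintype β]
    (A : Matrix (CutIdx dO n.val × β) (CutIdx dO n.val × β) ℂ)
    (M : Matrix (CutIdx dO (n.val + 1) × β) (CutIdx dO (n.val + 1) × β) ℂ) :
    (idTensorO dO n A * M).trace = (A * ptraceO dO n M).trace := by
  simp only [Matrix.trace, Matrix.diag_apply, Matrix.mul_apply, ptraceO]
  rw [sum_prod_extendAt_fst, Fintype.sum_prod_type]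
  refine Finset.sum_congr rfl fun p _ => Finset.sum_congr rfl fun b _ => ?_
  rw [Finset.sum_comm, sum_prod_extendAt_fst, Fintype.sum_prod_type]
  refine Finset.sum_congr rfl fun q _ => Finset.sum_congr rfl fun c _ => ?_
  simp only [idTensorO, restrictAt_extendAt, componentAt_extendAt, Finset.mul_sum, ite_mul,
    one_mul, zero_mul, Finset.sum_ite_eq', Finset.mem_univ, if_true]

lemma trace_mul_idTensorI {dI : Fin N → ℕ} {α : Type} [Fintype α]
    (G : Matrix (α × CutIdx dI (n.val + 1)) (α × CutIdx dI (n.val + 1)) ℂ)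
    (B : Matrix (α × CutIdx dI n.val) (α × CutIdx dI n.val) ℂ) :
    (G * idTensorI dI n B).trace = (ptraceI dI n G * B).trace := by
  simp only [Matrix.trace, Matrix.diag_apply, Matrix.mul_apply, ptraceI]
  rw [sum_prod_extendAt_snd, Fintype.sum_prod_type]
  refine Finset.sum_congr rfl fun a _ => Finset.sum_congr rfl fun p _ => ?_
  rw [Finset.sum_comm, sum_prod_extendAt_snd, Fintype.sum_prod_type]
  refine Finset.sum_congr rfl fun b _ => Finset.sum_congr rfl fun q _ => ?_
  simp only [idTensorI, restrictAt_extendAt, componentAt_extendAt, Finset.sum_mul, ite_mul,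
    one_mul, zero_mul, mul_ite, mul_zero, Finset.sum_ite_eq, Finset.mem_univ, if_true]

open scoped Kronecker in
lemma idTensorO_eq_submatrix_kronecker {dO : Fin N → ℕ} {β : Type}
    (A : Matrix (CutIdx dO n.val × β) (CutIdx dO n.val × β) ℂ) :
    idTensorO dO n A = ((1 : Matrix (Fin (dO n)) (Fin (dO n)) ℂ) ⊗ₖ A).submatrix
      (fun x => (componentAt dO n x.1, restrictAt dO n x.1, x.2))
      (fun x => (componentAt dO n x.1, restrictAt dO n x.1, x.2)) := by
  ext x y
  simp [idTensorO, Matrix.one_apply]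

lemma posSemidef_idTensorO {dO : Fin N → ℕ} {β : Type} [Finite β]
    {A : Matrix (CutIdx dO n.val × β) (CutIdx dO n.val × β) ℂ} (hA : A.PosSemidef) :
    (idTensorO dO n A).PosSemidef := by
  rw [idTensorO_eq_submatrix_kronecker]
  exact (PosDef.one.posSemidef.kronecker hA).submatrix _

end PartialTrace

section Sqrt

open scoped MatrixOrder

variable {ι : Type} [Fintype ι] [DecidableEq ι] {A : Matrix ι ι ℂ}

lemma msqrt_eq_sqrt (hA : A.PosSemidef) : msqrt A = CFC.sqrt A := by
  rw [msqrt, dif_pos hA, CFC.sqrt_eq_real_sqrt A hA.nonneg, cfcₙ_eq_cfc, hA.1.cfc_eq]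
  rfl

lemma posSemidef_msqrt_mul_mul_msqrt (hA : A.PosSemidef) {B : Matrix ι ι ℂ}
    (hB : B.PosSemidef) : (msqrt A * B * msqrt A).PosSemidef := by
  have hsqrt : (msqrt A)ᴴ = msqrt A := by
    rw [msqrt_eq_sqrt hA]
    exact (CFC.sqrt_nonneg A).posSemidef.1
  simpa only [hsqrt] using hB.mul_mul_conjTranspose_same (msqrt A)

lemma trace_msqrt_mul_mul_msqrt (hA : A.PosSemidef) (B : Matrix ι ι ℂ) :
    (msqrt A * B * msqrt A).trace = (A * B).trace := by
  rw [Matrix.trace_mul_cycle, msqrt_eq_sqrt hA, CFC.sqrt_mul_sqrt_self A hA.nonneg]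

end Sqrt

section Comb

variable {N : ℕ} {dO dI : Fin N → ℕ}

lemma trace_one_cMat_zero : (1 : CMat dO dI 0).trace = 1 := by
  rw [Matrix.trace_one, Fintype.card_prod, card_cutIdx_zero, card_cutIdx_zero]
  norm_num

lemma trace_idTensorO_mul_of_ptraceO_eq (n : Fin N)
    (G : Matrix (CutIdx dO n.val × CutIdx dI (n.val + 1))
      (CutIdx dO n.val × CutIdx dI (n.val + 1)) ℂ)
    {C' : CMat dO dI (n.val + 1)} {C : CMat dO dI n.val}
    (h : ptraceO dO n C' = idTensorI dI n C) :
    (idTensorO dO n G * C').trace = (ptraceI dI n G * C).trace := by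
  rw [trace_idTensorO_mul, Matrix.trace_mul_comm, h, Matrix.trace_mul_comm, trace_mul_idTensorI]

lemma trace_idTensorO_dualChain_mul_combChain (Cn : (n : ℕ) → CMat dO dI n)
    (G : (m : ℕ) → Matrix (CutIdx dO m × CutIdx dI (m + 1)) (CutIdx dO m × CutIdx dI (m + 1)) ℂ)
    (hCn0 : Cn 0 = 1)
    (hCn : ∀ n : Fin N, ptraceO dO n (Cn (n.val + 1)) = idTensorI dI n (Cn n.val))
    (hG0 : ∀ h0 : 0 < N, ptraceI dI ⟨0, h0⟩ (G 0) = 1)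
    (hG : ∀ m, ∀ h : m + 1 < N,
      ptraceI dI ⟨m + 1, h⟩ (G (m + 1)) = idTensorO dO ⟨m, Nat.lt_of_succ_lt h⟩ (G m)) :
    ∀ m, ∀ h : m < N, (idTensorO dO ⟨m, h⟩ (G m) * Cn (m + 1)).trace = 1
  | 0, h => by
    rw [trace_idTensorO_mul_of_ptraceO_eq _ _ (hCn ⟨0, h⟩), hG0 h, hCn0, Matrix.one_mul,
      trace_one_cMat_zero]
  | m + 1, h => by
    rw [trace_idTensorO_mul_of_ptraceO_eq _ _ (hCn ⟨m + 1, h⟩), hG m h]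
    exact trace_idTensorO_dualChain_mul_combChain Cn G hCn0 hCn hG0 hG m (Nat.lt_of_succ_lt h)

end Comb

/-- If `C` is a quantum comb and `Γ` a dual comb, then `Tr(Γ C) = 1`;
consequently `√Γ C √Γ` is a density operator. -/
theorem trace_dualComb_mul_comb {N : ℕ} (dO dI : Fin N → ℕ) (C Γ : CMat dO dI N)
    (hC : IsQuantumComb dO dI C) (hΓ : IsDualComb dO dI Γ) :
    (Γ * C).trace = 1 ∧ (msqrt Γ * C * msqrt Γ).PosSemidef ∧
      (msqrt Γ * C * msqrt Γ).trace = 1 := by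
  obtain ⟨hCpsd, Cn, -, hCnN, hCn0, hCn⟩ := hC
  obtain ⟨G, hGpsd, hG0, hG, hGlast, hGnil⟩ := hΓ
  obtain ⟨hΓpsd, htr⟩ : Γ.PosSemidef ∧ (Γ * C).trace = 1 := by
    cases N with
    | zero =>
      rw [hGnil rfl, ← hCnN, hCn0, Matrix.one_mul]
      exact ⟨PosDef.one.posSemidef, trace_one_cMat_zero⟩
    | succ M =>
      have hΓ : Γ = idTensorO dO ⟨M, M.lt_succ_self⟩ (G M) := hGlast M rfl
      rw [hΓ, ← hCnN]
      exact ⟨posSemidef_idTensorO _ (hGpsd M M.lt_succ_self),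
        trace_idTensorO_dualChain_mul_combChain Cn G hCn0 hCn hG0 hG M M.lt_succ_self⟩
  exact ⟨htr, posSemidef_msqrt_mul_mul_msqrt hΓpsd hCpsd, (trace_msqrt_mul_mul_msqrt hΓpsd C).trans htr⟩

end QComb
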